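/- arXiv:math/0407031 — 3 statements merged into one kernel-verified Lean document; each statement's English description precedes it below -/
import Mathlib

section
/- Suppose (i) coproducts of arbitrary families of objects of 𝐚 exist in 𝐀 and belong to 𝐚 again, and (ii) there is a small full subcategory 𝐠 of 𝐚 such that every object of 𝐚 is a retract of a coproduct of a family of objects from 𝐠. Then every object of 𝐀 has an 𝐚-resolution. -/
/-!
STATEMENT 0. Let `𝐀` be an additive category and `𝐚` a full (additive) subcategory,
encoded by a predicate `P` on objects.  Suppose (i) coproducts of arbitrary families of
objects of `𝐚` exist in `𝐀` and belong to `𝐚` again, and (ii) there is a small full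
subcategory `𝐠` of `𝐚` (encoded by a family `G : κ → C` of objects of `𝐚`) such that
every object of `𝐚` is a retract of a coproduct of a family of objects from `𝐠`.
Then every object of `𝐀` has an `𝐚`-resolution.
-/

open CategoryTheory CategoryTheory.Limits

universe v u

/-- A `ℤ`-indexed chain complex in an additive category `C`. -/
structure ChainComplexZ (C : Type u) [Category.{v} C] [Preadditive C] where
  X : ℤ → C
  d : ∀ n : ℤ, X (n + 1) ⟶ X n
  dd : ∀ n : ℤ, d (n + 1) ≫ d n = 0

namespace ChainComplexZ

variable {C : Type u} [Category.{v} C] [Preadditive C]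

/-- The chain complex of abelian groups `Hom(T, A_•)` is exact (acyclic). -/
def HomExact (A : ChainComplexZ C) (T : C) : Prop :=
  ∀ (n : ℤ) (a : T ⟶ A.X (n + 1)), a ≫ A.d n = 0 →
    ∃ b : T ⟶ A.X (n + 1 + 1), b ≫ A.d (n + 1) = a

/-- `𝐚`-exactness of a chain complex, where `𝐚` is the full subcategory on
objects satisfying `P`. -/
def aExact (A : ChainComplexZ C) (P : C → Prop) : Prop :=
  ∀ T : C, P T → A.HomExact T

/-- An `A₀`-augmented chain complex: `A_{-1} = A₀` and `A_{-n} = 0` for `n > 1`. -/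
structure IsAugmented (A : ChainComplexZ C) (A₀ : C) : Prop where
  eq_neg_one : A.X (-1) = A₀
  isZero_of_lt : ∀ n : ℤ, n < -1 → IsZero (A.X n)

/-- An `𝐚`-resolution of `A₀`: an `𝐚`-exact `A₀`-augmented chain complex with all
terms in nonnegative degrees in `𝐚`. -/
structure IsResolution (A : ChainComplexZ C) (P : C → Prop) (A₀ : C) : Prop where
  augmented : A.IsAugmented A₀
  exact : A.aExact P
  mem : ∀ n : ℤ, 0 ≤ n → P (A.X n)

end ChainComplexZ

/-!
Cover `A₀` by the coproduct of all maps from objects of `𝐠` into it, then cover the kernel of that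
map in the same way (by the coproduct of all maps from `𝐠` that it kills), and so on. A map from an
object of `𝐚` that is killed by the differential factors through the next cover because the object
is a retract of a coproduct of objects of `𝐠`, and the restriction of the map to each summand is
one of the maps indexing that cover.
-/

namespace ChainComplexZ

variable {C : Type u} [Category.{v} C] [Preadditive C]

section AugmentedOfNat

variable (X : ℕ → C) (d : ∀ n, X (n + 1) ⟶ X n) (dd : ∀ n, d (n + 1) ≫ d n = 0) (Z : C)

/-- `X (n + 1)` sits in degree `n`, `X 0` in degree `-1`, and `Z` below. -/
def augmentedX : ℤ → C
  | .ofNat n => X (n + 1)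
  | .negSucc 0 => X 0
  | .negSucc (_ + 1) => Z

def augmentedD : ∀ n : ℤ, augmentedX X Z (n + 1) ⟶ augmentedX X Z n
  | .ofNat n => d (n + 1)
  | .negSucc 0 => d 0
  | .negSucc (_ + 1) => 0

def augmentedOfNat : ChainComplexZ C where
  X := augmentedX X Z
  d := augmentedD X d Z
  dd
    | .ofNat n => dd (n + 1)
    | .negSucc 0 => dd 0
    | .negSucc (_ + 1) => comp_zero

variable {X d Z}

lemma augmentedOfNat_isAugmented (hZ : IsZero Z) :
    (augmentedOfNat X d dd Z).IsAugmented (X 0) where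
  eq_neg_one := rfl
  isZero_of_lt
    | .ofNat _, h => by rw [Int.ofNat_eq_natCast] at h; omega
    | .negSucc 0, h => absurd h (by decide)
    | .negSucc (_ + 1), _ => hZ

lemma augmentedOfNat_homExact (hZ : IsZero Z) {T : C}
    (hsurj : ∀ a : T ⟶ X 0, ∃ b : T ⟶ X 1, b ≫ d 0 = a)
    (hexact : ∀ n (a : T ⟶ X (n + 1)), a ≫ d n = 0 → ∃ b : T ⟶ X (n + 2), b ≫ d (n + 1) = a) :
    (augmentedOfNat X d dd Z).HomExact T
  | .ofNat n, a, ha => hexact (n + 1) a ha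
  | .negSucc 0, a, ha => hexact 0 a ha
  | .negSucc 1, a, _ => hsurj a
  | .negSucc (_ + 2), _, _ => ⟨0, hZ.eq_of_tgt _ _⟩

lemma augmentedOfNat_isResolution (P : C → Prop) (hZ : IsZero Z) (hmem : ∀ n, P (X (n + 1)))
    (hsurj : ∀ T, P T → ∀ a : T ⟶ X 0, ∃ b : T ⟶ X 1, b ≫ d 0 = a)
    (hexact : ∀ T, P T → ∀ n (a : T ⟶ X (n + 1)), a ≫ d n = 0 →
      ∃ b : T ⟶ X (n + 2), b ≫ d (n + 1) = a) :
    (augmentedOfNat X d dd Z).IsResolution P (X 0) where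
  augmented := augmentedOfNat_isAugmented dd hZ
  exact T hT := augmentedOfNat_homExact dd hZ (hsurj T hT) (hexact T hT)
  mem
    | .ofNat n, _ => hmem n
    | .negSucc _, h => absurd h (by omega)

end AugmentedOfNat

end ChainComplexZ

section

variable {C : Type u} [Category.{v} C] [Preadditive C]

lemma exists_lift_of_retract_of_coproduct {ι : Type*} {G : ι → C} {c : Cofan G} (hc : IsColimit c)
    {X B B' T : C} {e : B ⟶ T} {π : B' ⟶ B}
    (hG : ∀ i (f : G i ⟶ B), f ≫ e = 0 → ∃ g : G i ⟶ B', g ≫ π = f)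
    (r : X ⟶ c.pt) (q : c.pt ⟶ X) (hrq : r ≫ q = 𝟙 X) (a : X ⟶ B) (ha : a ≫ e = 0) :
    ∃ b : X ⟶ B', b ≫ π = a := by
  choose g hg using fun i => hG i (c.inj i ≫ q ≫ a) (by simp [ha])
  have hdesc : Cofan.IsColimit.desc hc g ≫ π = q ≫ a :=
    Cofan.IsColimit.hom_ext hc _ _ fun i => by simp [hg]
  exact ⟨r ≫ Cofan.IsColimit.desc hc g, by rw [Category.assoc, hdesc, reassoc_of% hrq]⟩

variable (P : C → Prop)

structure KernelPrecover {B T : C} (e : B ⟶ T) where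
  pt : C
  π : pt ⟶ B
  mem : P pt
  π_comp : π ≫ e = 0
  exists_lift : ∀ X, P X → ∀ a : X ⟶ B, a ≫ e = 0 → ∃ b : X ⟶ pt, b ≫ π = a

variable {P}

lemma KernelPrecover.nonempty
    (hcoprod : ∀ (ι : Type v) (f : ι → C), (∀ i, P (f i)) →
      ∃ c : Cofan f, Nonempty (IsColimit c) ∧ P c.pt)
    {κ : Type v} (G : κ → C) (hG : ∀ k, P (G k))
    (hret : ∀ X : C, P X → ∃ (ι : Type v) (s : ι → κ) (c : Cofan (fun i => G (s i))),
      Nonempty (IsColimit c) ∧ ∃ (r : X ⟶ c.pt) (q : c.pt ⟶ X), r ≫ q = 𝟙 X)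
    {B T : C} (e : B ⟶ T) : Nonempty (KernelPrecover P e) := by
  obtain ⟨c, ⟨hc⟩, hcP⟩ := hcoprod (Σ k, {f : G k ⟶ B // f ≫ e = 0}) (fun j => G j.1)
    fun j => hG j.1
  let π : c.pt ⟶ B := Cofan.IsColimit.desc hc fun j => j.2.1
  have hπ : π ≫ e = 0 := Cofan.IsColimit.hom_ext hc _ _ fun j => by simp [π, j.2.2]
  refine ⟨⟨c.pt, π, hcP, hπ, fun X hX a ha => ?_⟩⟩
  obtain ⟨ι, s, c', ⟨hc'⟩, r, q, hrq⟩ := hret X hX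
  exact exists_lift_of_retract_of_coproduct hc'
    (fun i f hf => ⟨c.inj ⟨s i, f, hf⟩, Cofan.IsColimit.fac hc _ _⟩) r q hrq a ha

namespace KernelPrecover

section Iterate

variable (cover : ∀ {B T : C} (e : B ⟶ T), KernelPrecover P e)

noncomputable def iterate (f : Arrow C) : ℕ → Arrow C
  | 0 => f
  | n + 1 => Arrow.mk (cover (iterate f n).hom).π

variable (f : Arrow C) (n : ℕ)

lemma iterate_succ_hom_comp : (iterate cover f (n + 1)).hom ≫ (iterate cover f n).hom = 0 :=
  (cover _).π_comp

lemma mem_iterate_succ_left : P (iterate cover f (n + 1)).left := (cover _).mem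

lemma exists_lift_iterate {X : C} (hX : P X) (a : X ⟶ (iterate cover f n).left)
    (ha : a ≫ (iterate cover f n).hom = 0) :
    ∃ b : X ⟶ (iterate cover f (n + 1)).left, b ≫ (iterate cover f (n + 1)).hom = a :=
  (cover _).exists_lift X hX a ha

end Iterate

open ZeroObject in
lemma exists_isResolution [HasZeroObject C]
    (cover : ∀ {B T : C} (e : B ⟶ T), KernelPrecover P e) (A₀ : C) :
    ∃ R : ChainComplexZ C, R.IsResolution P A₀ := by
  -- the kernel of the zero map is everything, so the first precover covers all of `A₀`
  let F := iterate cover (Arrow.mk (0 : A₀ ⟶ A₀))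
  exact ⟨_, ChainComplexZ.augmentedOfNat_isResolution (X := fun n => (F n).left)
    (d := fun n => (F (n + 1)).hom) (fun n => iterate_succ_hom_comp cover _ (n + 1)) P
    (isZero_zero C) (mem_iterate_succ_left cover _)
    (fun _ hT a => exists_lift_iterate cover _ 0 hT a comp_zero)
    (fun _ hT n a ha => exists_lift_iterate cover _ (n + 1) hT a ha)⟩

end KernelPrecover

end

theorem statement0_general {C : Type u} [Category.{v} C] [Preadditive C]
    [HasZeroObject C]
    (P : C → Prop)
    -- (i) coproducts of arbitrary families of objects of `𝐚` exist and lie in `𝐚`: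
    (hcoprod : ∀ (ι : Type v) (f : ι → C), (∀ i, P (f i)) →
      ∃ c : Cofan f, Nonempty (IsColimit c) ∧ P c.pt)
    -- (ii) a small (full) subcategory `𝐠 ⊆ 𝐚` such that every object of `𝐚` is a
    -- retract of a coproduct of a family of objects of `𝐠`:
    (hgen : ∃ (κ : Type v) (G : κ → C), (∀ k, P (G k)) ∧
      ∀ X : C, P X → ∃ (ι : Type v) (s : ι → κ) (c : Cofan (fun i => G (s i))),
        Nonempty (IsColimit c) ∧ ∃ (r : X ⟶ c.pt) (q : c.pt ⟶ X), r ≫ q = 𝟙 X) :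
    -- then every object of `𝐀` has an `𝐚`-resolution:
    ∀ A₀ : C, ∃ R : ChainComplexZ C, R.IsResolution P A₀ := by
  obtain ⟨κ, G, hG, hret⟩ := hgen
  exact KernelPrecover.exists_isResolution fun e =>
    (KernelPrecover.nonempty hcoprod G hG hret e).some

theorem statement0 {C : Type u} [Category.{v} C] [Preadditive C]
    [HasFiniteBiproducts C] [HasZeroObject C]
    (P : C → Prop)
    -- (i) coproducts of arbitrary families of objects of `𝐚` exist and lie in `𝐚`:
    (hcoprod : ∀ (ι : Type v) (f : ι → C), (∀ i, P (f i)) →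
      ∃ c : Cofan f, Nonempty (IsColimit c) ∧ P c.pt)
    -- (ii) a small (full) subcategory `𝐠 ⊆ 𝐚` such that every object of `𝐚` is a
    -- retract of a coproduct of a family of objects of `𝐠`:
    (hgen : ∃ (κ : Type v) (G : κ → C), (∀ k, P (G k)) ∧
      ∀ X : C, P X → ∃ (ι : Type v) (s : ι → κ) (c : Cofan (fun i => G (s i))),
        Nonempty (IsColimit c) ∧ ∃ (r : X ⟶ c.pt) (q : c.pt ⟶ X), r ≫ q = 𝟙 X) :
    -- then every object of `𝐀` has an `𝐚`-resolution:
    ∀ A₀ : C, ∃ R : ChainComplexZ C, R.IsResolution P A₀ :=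
  statement0_general P hcoprod hgen
end

section
/- Let 𝐛 be a full track subcategory of 𝐁 and let B_• and B'_• be two B-augmented secondary chain complexes in 𝐁. If all B_n (n ≥ 0) belong to 𝐛 and B'_• is 𝐛-exact, then there exists a secondary chain map (f,φ) : B_• → B'_• over B, i.e. with f_{-1} equal to the identity of B. -/
/-!
Track categories.  A track category is a category enriched in groupoids, i.e. a strict
2-category (`Bicategory` + `Bicategory.Strict`) all of whose 2-cells ("tracks") are
invertible.  Invertibility of all 2-cells is imposed by the hypothesis `hinv` below.
A strict zero object is an object whose hom-groupoids from and to any object are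
trivial (exactly one map, exactly one track).
-/

open CategoryTheory CategoryTheory.Bicategory

universe w v u

/-- A strict zero object `∗` in a (strict) track category: for every `X` the
hom-groupoids `⟦X,∗⟧` and `⟦∗,X⟧` have exactly one object and one morphism. -/
class StrictZero (B : Type u) [Bicategory.{w, v} B] where
  zobj : B
  uniqueTo : ∀ X : B, Unique (X ⟶ zobj)
  uniqueFrom : ∀ X : B, Unique (zobj ⟶ X)
  uniqueTrackTo : ∀ (X : B) (f g : X ⟶ zobj), Unique (f ⟶ g)
  uniqueTrackFrom : ∀ (X : B) (f g : zobj ⟶ X), Unique (f ⟶ g)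

section

variable {B : Type u} [Bicategory.{w, v} B] [Bicategory.Strict B] [StrictZero B]

/-- The zero map `0_{X,Y} : X → ∗ → Y`. -/
def zmap (X Y : B) : X ⟶ Y :=
  (StrictZero.uniqueTo X).default ≫ (StrictZero.uniqueFrom Y).default

lemma zmap_comp (X : B) {Y Z : B} (f : Y ⟶ Z) : zmap X Y ≫ f = zmap X Z := by
  unfold zmap
  rw [Bicategory.Strict.assoc]
  congr 1
  haveI := StrictZero.uniqueFrom (B := B) Z
  exact Subsingleton.elim _ _

lemma comp_zmap {X Y : B} (f : X ⟶ Y) (Z : B) : f ≫ zmap Y Z = zmap X Z := by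
  unfold zmap
  rw [← Bicategory.Strict.assoc]
  congr 1
  haveI := StrictZero.uniqueTo (B := B) X
  exact Subsingleton.elim _ _

end

/-- A secondary chain complex `(A, d, δ)` in a track category `B`: objects `A_n`, maps
`d_n : A_{n+1} ⟶ A_n` and tracks `δ_n : d_n d_{n+1} ⇒ 0` such that
`d_{n-1} δ_n = δ_{n-1} d_{n+1}` (as tracks `d_{n-1} d_n d_{n+1} ⇒ 0`). -/
structure SecChainComplex (B : Type u) [Bicategory.{w, v} B] [Bicategory.Strict B]
    [StrictZero B] where
  X : ℤ → B
  d : ∀ n : ℤ, X (n + 1) ⟶ X n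
  δ : ∀ n : ℤ, (d (n + 1) ≫ d n) ⟶ zmap (X (n + 1 + 1)) (X n)
  compat : ∀ n : ℤ,
    (δ (n + 1) ▷ d n) ≫ eqToHom (zmap_comp (X (n + 1 + 1 + 1)) (d n)) =
      eqToHom (Bicategory.Strict.assoc (d (n + 1 + 1)) (d (n + 1)) (d n)) ≫
        (d (n + 1 + 1) ◁ δ n) ≫ eqToHom (comp_zmap (d (n + 1 + 1)) (X n))

namespace SecChainComplex

variable {B : Type u} [Bicategory.{w, v} B] [Bicategory.Strict B] [StrictZero B]

/-- A `𝐛`-cycle of degree `n+2` in a secondary chain complex: a map `c : T ⟶ A_{n+2}`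
together with a track `γ : d_{n+1} c ⇒ 0` such that `d_n γ = δ_n c`. -/
def IsSecCycle (A : SecChainComplex B) {T : B} (n : ℤ) (c : T ⟶ A.X (n + 1 + 1))
    (γ : c ≫ A.d (n + 1) ⟶ zmap T (A.X (n + 1))) : Prop :=
  (γ ▷ A.d n) ≫ eqToHom (zmap_comp T (A.d n)) =
    eqToHom (Bicategory.Strict.assoc c (A.d (n + 1)) (A.d n)) ≫
      (c ◁ A.δ n) ≫ eqToHom (comp_zmap c (A.X n))

/-- A `𝐛`-cycle `(c,γ)` is a `𝐛`-boundary if there are `a : T ⟶ A_{n+3}` and a track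
`α : c ⇒ d_{n+2} a` with `γ = δ_{n+1} a □ d_{n+1} α`. -/
def IsSecBoundary (A : SecChainComplex B) {T : B} (n : ℤ) (c : T ⟶ A.X (n + 1 + 1))
    (γ : c ≫ A.d (n + 1) ⟶ zmap T (A.X (n + 1))) : Prop :=
  ∃ (a : T ⟶ A.X (n + 1 + 1 + 1)) (α : c ⟶ a ≫ A.d (n + 1 + 1)),
    γ = (α ▷ A.d (n + 1)) ≫
        eqToHom (Bicategory.Strict.assoc a (A.d (n + 1 + 1)) (A.d (n + 1))) ≫
        (a ◁ A.δ (n + 1)) ≫ eqToHom (comp_zmap a (A.X (n + 1)))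

/-- `𝐛`-exactness of a secondary chain complex, `𝐛` being the full track subcategory
on the objects satisfying `Pb`: every `𝐛`-cycle is a `𝐛`-boundary. -/
def IsSecExact (A : SecChainComplex B) (Pb : B → Prop) : Prop :=
  ∀ (n : ℤ) (T : B), Pb T → ∀ (c : T ⟶ A.X (n + 1 + 1))
    (γ : c ≫ A.d (n + 1) ⟶ zmap T (A.X (n + 1))),
    A.IsSecCycle n c γ → A.IsSecBoundary n c γ

/-- A `B₀`-augmented secondary chain complex: `X_{-1} = B₀`, `X_{-n} = ∗` and
`δ_{-n}` the identity track for `n > 1`. -/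
structure IsAugmented (A : SecChainComplex B) (B₀ : B) : Prop where
  eq_neg_one : A.X (-1) = B₀
  eq_zero_of_lt : ∀ n : ℤ, n < -1 → A.X n = StrictZero.zobj (B := B)
  δ_eqToHom : ∀ n : ℤ, n < -1 →
    ∀ h : A.d (n + 1) ≫ A.d n = zmap (A.X (n + 1 + 1)) (A.X n), A.δ n = eqToHom h

/-- A `𝐛`-resolution of `B₀`: a `𝐛`-exact `B₀`-augmented secondary chain complex with
all terms in nonnegative degrees in `𝐛`. -/
structure IsSecResolution (A : SecChainComplex B) (Pb : B → Prop) (B₀ : B) : Prop where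
  augmented : A.IsAugmented B₀
  exact : A.IsSecExact Pb
  mem : ∀ n : ℤ, 0 ≤ n → Pb (A.X n)

end SecChainComplex

/-!
STATEMENT 12. Secondary comparison: if `B_•` and `B'_•` are `B₀`-augmented secondary
chain complexes, all `B_n` (`n ≥ 0`) lie in `𝐛`, and `B'_•` is `𝐛`-exact, then there
is a secondary chain map `(f,φ) : B_• → B'_•` over `B₀`, i.e. with `f_{-1} = 𝟙 B₀`.
-/

section Statement12

variable {B : Type u} [Bicategory.{w, v} B] [Bicategory.Strict B] [StrictZero B]

/-- A secondary chain map `(f,φ) : (A,d,δ) → (A',d',δ')`: maps `f_n : A_n ⟶ A'_n` and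
tracks `φ_n : f_n d_n ⇒ d'_n f_{n+1}` such that
`δ'_{n-1} f_{n+1} □ d'_{n-1} φ_n □ φ_{n-1} d_n = f_{n-1} δ_{n-1}`
as tracks `f_{n-1} d_{n-1} d_n ⇒ 0` for all `n`. -/
def IsSecChainMap (A A' : SecChainComplex B) (f : ∀ n : ℤ, A.X n ⟶ A'.X n)
    (φ : ∀ n : ℤ, (A.d n ≫ f n) ⟶ (f (n + 1) ≫ A'.d n)) : Prop :=
  ∀ n : ℤ,
    eqToHom (Bicategory.Strict.assoc (A.d (n + 1)) (A.d n) (f n)) ≫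
        (A.d (n + 1) ◁ φ n) ≫
        eqToHom (Bicategory.Strict.assoc (A.d (n + 1)) (f (n + 1)) (A'.d n)).symm ≫
        (φ (n + 1) ▷ A'.d n) ≫
        eqToHom (Bicategory.Strict.assoc (f (n + 1 + 1)) (A'.d (n + 1)) (A'.d n)) ≫
        (f (n + 1 + 1) ◁ A'.δ n) ≫
        eqToHom (comp_zmap (f (n + 1 + 1)) (A'.X n)) =
      (A.δ n ▷ f n) ≫ eqToHom (zmap_comp (A.X (n + 1 + 1)) (f n))


/-!
The maps `f_n` and tracks `φ_n` are built by induction on `n`. Below degree `0` both complexes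
are the augmentation `B ← ∗ ← ∗ ← ⋯`, so there `f` is the identity and the tracks are trivial.
Suppose `f` is built up to degree `n+2` and `φ` up to degree `n+1`, with the chain condition
relating `φ_n` and `φ_{n+1}`, and `φ_{n+1}` invertible. That condition makes
`f_{n+2} d_{n+2} : B_{n+3} → B'_{n+2}`, with the track `f_{n+1}δ_{n+1} □ φ_{n+1}⁻¹d_{n+2}`,
a `𝐛`-cycle of `B'_•`. Since `B_{n+3}` lies in `𝐛`, it is a `𝐛`-boundary; a boundary witness is
precisely a map `f_{n+3}` with a track `φ_{n+2} : f_{n+2} d_{n+2} ⇒ d'_{n+2} f_{n+3}`, and the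
boundary equation is the chain condition relating `φ_{n+1}` and `φ_{n+2}`.
-/

open StrictZero SecChainComplex

lemma hom_eq_of_eq_zobj {X Y : B} (hY : Y = zobj (B := B)) (u v : X ⟶ Y) : u = v := by
  subst hY
  have := uniqueTo (B := B) X
  exact Subsingleton.elim u v

lemma track_eq_of_eq_zobj {X Y : B} (hY : Y = zobj (B := B)) {u v : X ⟶ Y} (θ η : u ⟶ v) :
    θ = η := by
  subst hY
  have := uniqueTrackTo (B := B) X u v
  exact Subsingleton.elim θ η

lemma zmap_whiskerLeft {X Y Z : B} {u v : Y ⟶ Z} (θ : u ⟶ v) :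
    zmap X Y ◁ θ = eqToHom ((zmap_comp X u).trans (zmap_comp X v).symm) := by
  have hu : (uniqueFrom Y).default ≫ u = (uniqueFrom Y).default ≫ v :=
    (uniqueFrom Z).instSubsingleton.elim _ _
  have := uniqueTrackFrom Z ((uniqueFrom Y).default ≫ u) ((uniqueFrom Y).default ≫ v)
  unfold zmap
  rw [comp_whiskerLeft, Subsingleton.elim ((uniqueFrom Y).default ◁ θ) (eqToHom hu)]
  simp [Strict.associator_eqToIso]

lemma whisker_exchange_zmap {X Y Z : B} {g : X ⟶ Y} (θ : g ⟶ zmap X Y) {u v : Y ⟶ Z}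
    (φ : u ⟶ v) :
    g ◁ φ ≫ θ ▷ v = θ ▷ u ≫ eqToHom ((zmap_comp X u).trans (zmap_comp X v).symm) := by
  rw [whisker_exchange, zmap_whiskerLeft]

lemma SecChainComplex.IsAugmented.X_eq {A A' : SecChainComplex B} {B₀ : B}
    (hA : A.IsAugmented B₀) (hA' : A'.IsAugmented B₀) {m : ℤ} (hm : m ≤ -1) :
    A.X m = A'.X m := by
  rcases hm.lt_or_eq with hm | rfl
  · exact (hA.eq_zero_of_lt m hm).trans (hA'.eq_zero_of_lt m hm).symm
  · exact hA.eq_neg_one.trans hA'.eq_neg_one.symm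

section SecChainCondition

variable {A A' : SecChainComplex B}

def SecChainCondition (n : ℤ) {f0 : A.X n ⟶ A'.X n} {f1 : A.X (n + 1) ⟶ A'.X (n + 1)}
    {f2 : A.X (n + 1 + 1) ⟶ A'.X (n + 1 + 1)}
    (φ0 : (A.d n ≫ f0) ⟶ (f1 ≫ A'.d n))
    (φ1 : (A.d (n + 1) ≫ f1) ⟶ (f2 ≫ A'.d (n + 1))) : Prop :=
  eqToHom (Strict.assoc (A.d (n + 1)) (A.d n) f0) ≫
      (A.d (n + 1) ◁ φ0) ≫
      eqToHom (Strict.assoc (A.d (n + 1)) f1 (A'.d n)).symm ≫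
      (φ1 ▷ A'.d n) ≫
      eqToHom (Strict.assoc f2 (A'.d (n + 1)) (A'.d n)) ≫
      (f2 ◁ A'.δ n) ≫
      eqToHom (comp_zmap f2 (A'.X n)) =
    (A.δ n ▷ f0) ≫ eqToHom (zmap_comp (A.X (n + 1 + 1)) f0)

/-- `f_{n+1}δ_{n+1} □ φ_{n+1}⁻¹d_{n+2} : d'_{n+1} f_{n+2} d_{n+2} ⇒ 0` in the paper's notation. -/
noncomputable def cycleTrack (n : ℤ) {f1 : A.X (n + 1) ⟶ A'.X (n + 1)}
    {f2 : A.X (n + 1 + 1) ⟶ A'.X (n + 1 + 1)} (φ : (A.d (n + 1) ≫ f1) ⟶ (f2 ≫ A'.d (n + 1)))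
    [IsIso φ] :
    ((A.d (n + 1 + 1) ≫ f2) ≫ A'.d (n + 1)) ⟶ zmap (A.X (n + 1 + 1 + 1)) (A'.X (n + 1)) :=
  eqToHom (Strict.assoc (A.d (n + 1 + 1)) f2 (A'.d (n + 1))) ≫
    (A.d (n + 1 + 1) ◁ inv φ) ≫
    eqToHom (Strict.assoc (A.d (n + 1 + 1)) (A.d (n + 1)) f1).symm ≫
    (A.δ (n + 1) ▷ f1) ≫ eqToHom (zmap_comp (A.X (n + 1 + 1 + 1)) f1)

variable {n : ℤ} {f1 : A.X (n + 1) ⟶ A'.X (n + 1)} {f2 : A.X (n + 1 + 1) ⟶ A'.X (n + 1 + 1)}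
  {f3 : A.X (n + 1 + 1 + 1) ⟶ A'.X (n + 1 + 1 + 1)}
  {φ1 : (A.d (n + 1) ≫ f1) ⟶ (f2 ≫ A'.d (n + 1))}
  {φ2 : (A.d (n + 1 + 1) ≫ f2) ⟶ (f3 ≫ A'.d (n + 1 + 1))}

lemma secChainCondition_of_cycleTrack_eq [IsIso φ1]
    (h : cycleTrack n φ1 =
      (φ2 ▷ A'.d (n + 1)) ≫ eqToHom (Strict.assoc f3 (A'.d (n + 1 + 1)) (A'.d (n + 1))) ≫
        (f3 ◁ A'.δ (n + 1)) ≫ eqToHom (comp_zmap f3 (A'.X (n + 1)))) :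
    SecChainCondition (n + 1) φ1 φ2 := by
  rw [SecChainCondition, ← h, cycleTrack]
  simp [← whiskerLeft_comp_assoc]

-- Precompose with the invertible `(d_{n+3} d_{n+2}) ◁ φ_{n+1}`: interchange turns the left side
-- into `δ_{n+2} ▷ (d_{n+1} f_{n+1})`, and `d_{n+3} ◁ (chain condition)` with `A.compat` the right.
lemma δ_whiskerRight_eq_of_secChainCondition [IsIso φ1] (h : SecChainCondition (n + 1) φ1 φ2) :
    A.δ (n + 1 + 1) ▷ (f2 ≫ A'.d (n + 1)) ≫ eqToHom (zmap_comp _ _) =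
      eqToHom (by simp only [Strict.assoc]) ≫ (A.d (n + 1 + 1 + 1) ◁ φ2) ▷ A'.d (n + 1) ≫
        eqToHom (by simp only [Strict.assoc]) ≫ (A.d (n + 1 + 1 + 1) ≫ f3) ◁ A'.δ (n + 1) ≫
        eqToHom (comp_zmap _ _) := by
  rw [← cancel_epi ((A.d (n + 1 + 1 + 1) ≫ A.d (n + 1 + 1)) ◁ φ1),
    reassoc_of% (whisker_exchange_zmap (A.δ (n + 1 + 1)) φ1)]
  have key := congrArg (A.d (n + 1 + 1 + 1) ◁ ·) h
  simp only [whiskerLeft_comp, whiskerLeft_eqToHom, eqToHom_comp_iff] at key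
  simp only [← Category.assoc, comp_eqToHom_iff] at key
  simp only [Category.assoc] at key
  have compat := congrArg (· ▷ f1) (A.compat (n + 1))
  simp only [comp_whiskerRight, eqToHom_whiskerRight, whisker_assoc, Strict.associator_eqToIso,
    eqToIso.hom, eqToIso.inv, Category.assoc, comp_eqToHom_iff] at compat
  simp only [comp_whiskerLeft, whiskerRight_comp, whisker_assoc, Strict.associator_eqToIso,
    eqToIso.hom, eqToIso.inv, Category.assoc, eqToHom_trans, eqToHom_trans_assoc]
  rw [reassoc_of% key, compat]
  simp

lemma isSecCycle_cycleTrack [IsIso φ1] [IsIso φ2] (h : SecChainCondition (n + 1) φ1 φ2) :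
    A'.IsSecCycle (n + 1) (A.d (n + 1 + 1 + 1) ≫ f3) (cycleTrack (n + 1) φ2) := by
  have hδ := δ_whiskerRight_eq_of_secChainCondition h
  simp only [whiskerRight_comp, Strict.associator_eqToIso, eqToIso.hom, eqToIso.inv,
    Category.assoc, eqToHom_comp_iff] at hδ
  simp only [← Category.assoc, comp_eqToHom_iff] at hδ
  simp only [Category.assoc] at hδ
  rw [IsSecCycle, cycleTrack]
  simp only [comp_whiskerRight, eqToHom_whiskerRight, Category.assoc, hδ]
  simp

end SecChainCondition

section Construction

variable (A A' : SecChainComplex B)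

-- The comparison in degrees `n`, `n + 1`, `n + 2`, with the cycle that produces degree `n + 3`.
structure ComparisonStage (n : ℤ) where
  f0 : A.X n ⟶ A'.X n
  f1 : A.X (n + 1) ⟶ A'.X (n + 1)
  f2 : A.X (n + 1 + 1) ⟶ A'.X (n + 1 + 1)
  φ0 : (A.d n ≫ f0) ⟶ (f1 ≫ A'.d n)
  φ1 : (A.d (n + 1) ≫ f1) ⟶ (f2 ≫ A'.d (n + 1))
  [isIso_φ1 : IsIso φ1]
  secChainCondition : SecChainCondition n φ0 φ1
  isSecCycle : A'.IsSecCycle n (A.d (n + 1 + 1) ≫ f2) (cycleTrack n φ1)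

attribute [instance] ComparisonStage.isIso_φ1

variable {A A'}

namespace ComparisonStage

noncomputable def next (hinv : ∀ {X Y : B} {f g : X ⟶ Y} (η : f ⟶ g), IsIso η)
    {Pb : B → Prop} (hex : A'.IsSecExact Pb) {n : ℤ} (s : ComparisonStage A A' n)
    (hT : Pb (A.X (n + 1 + 1 + 1))) : ComparisonStage A A' (n + 1) :=
  have hb := hex n _ hT _ _ s.isSecCycle
  have := hinv hb.choose_spec.choose
  have hchain := secChainCondition_of_cycleTrack_eq hb.choose_spec.choose_spec
  { f0 := s.f1
    f1 := s.f2
    f2 := hb.choose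
    φ0 := s.φ1
    φ1 := hb.choose_spec.choose
    secChainCondition := hchain
    isSecCycle := isSecCycle_cycleTrack hchain }

def ofAugmented {B₀ : B} (hA : A.IsAugmented B₀) (hA' : A'.IsAugmented B₀) {n : ℤ}
    (hn : n ≤ -3) : ComparisonStage A A' n where
  f0 := eqToHom (hA.X_eq hA' (by omega))
  f1 := eqToHom (hA.X_eq hA' (by omega))
  f2 := eqToHom (hA.X_eq hA' (by omega))
  φ0 := eqToHom (hom_eq_of_eq_zobj (hA'.eq_zero_of_lt n (by omega)) _ _)
  φ1 := eqToHom (hom_eq_of_eq_zobj (hA'.eq_zero_of_lt (n + 1) (by omega)) _ _)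
  secChainCondition := track_eq_of_eq_zobj (hA'.eq_zero_of_lt n (by omega)) _ _
  isSecCycle := track_eq_of_eq_zobj (hA'.eq_zero_of_lt n (by omega)) _ _

lemma secChainCondition_of_eq_next
    {hinv : ∀ {X Y : B} {f g : X ⟶ Y} (η : f ⟶ g), IsIso η}
    {Pb : B → Prop} {hex : A'.IsSecExact Pb} {n : ℤ} {s : ComparisonStage A A' n}
    {s1 : ComparisonStage A A' (n + 1)} {s2 : ComparisonStage A A' (n + 1 + 1)}
    {hT : Pb (A.X (n + 1 + 1 + 1))} {hT1 : Pb (A.X (n + 1 + 1 + 1 + 1))}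
    (h1 : s1 = s.next hinv hex hT) (h2 : s2 = s1.next hinv hex hT1)
    (p : s.f1 ≫ A'.d n = s1.f0 ≫ A'.d n) (q : s1.f1 ≫ A'.d (n + 1) = s2.f0 ≫ A'.d (n + 1)) :
    SecChainCondition n (s.φ0 ≫ eqToHom p) (s1.φ0 ≫ eqToHom q) := by
  subst h1 h2
  dsimp only [next]
  simpa using s.secChainCondition

end ComparisonStage

variable (hinv : ∀ {X Y : B} {f g : X ⟶ Y} (η : f ⟶ g), IsIso η)
  {Pb : B → Prop} (hex : A'.IsSecExact Pb) (hmem : ∀ n : ℤ, 0 ≤ n → Pb (A.X n))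
  {B₀ : B} (hA : A.IsAugmented B₀) (hA' : A'.IsAugmented B₀)

noncomputable def comparisonStage (n : ℤ) : ComparisonStage A A' n :=
  Int.inductionOn' n (-3) (.ofAugmented hA hA' le_rfl)
    (fun _ hk s => s.next hinv hex (hmem _ (by omega)))
    (fun _ hk _ => .ofAugmented hA hA' (by omega))

lemma comparisonStage_succ {n : ℤ} (hn : -3 ≤ n) :
    comparisonStage hinv hex hmem hA hA' (n + 1) =
      (comparisonStage hinv hex hmem hA hA' n).next hinv hex (hmem _ (by omega)) :=
  Int.inductionOn'_add_one hn

lemma comparisonStage_f1 (n : ℤ) :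
    (comparisonStage hinv hex hmem hA hA' n).f1 =
      (comparisonStage hinv hex hmem hA hA' (n + 1)).f0 := by
  by_cases hn : -3 ≤ n
  · rw [comparisonStage_succ hinv hex hmem hA hA' hn]
    rfl
  · exact hom_eq_of_eq_zobj (hA'.eq_zero_of_lt (n + 1) (by omega)) _ _

noncomputable def comparisonMap (n : ℤ) : A.X n ⟶ A'.X n :=
  (comparisonStage hinv hex hmem hA hA' n).f0

noncomputable def comparisonTrack (n : ℤ) :
    (A.d n ≫ comparisonMap hinv hex hmem hA hA' n) ⟶
      (comparisonMap hinv hex hmem hA hA' (n + 1) ≫ A'.d n) :=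
  (comparisonStage hinv hex hmem hA hA' n).φ0 ≫
    eqToHom (congrArg (· ≫ A'.d n) (comparisonStage_f1 hinv hex hmem hA hA' n))

lemma isSecChainMap_comparison :
    IsSecChainMap A A' (comparisonMap hinv hex hmem hA hA')
      (comparisonTrack hinv hex hmem hA hA') := by
  intro n
  by_cases hn : -3 ≤ n
  · exact ComparisonStage.secChainCondition_of_eq_next
      (comparisonStage_succ hinv hex hmem hA hA' hn)
      (comparisonStage_succ hinv hex hmem hA hA' (by omega)) _ _
  · exact track_eq_of_eq_zobj (hA'.eq_zero_of_lt n (by omega)) _ _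

lemma comparisonMap_neg_one :
    comparisonMap hinv hex hmem hA hA' (-1) =
      eqToHom (hA.eq_neg_one.trans hA'.eq_neg_one.symm) := by
  have h1 : comparisonStage hinv hex hmem hA hA' (-1) =
      (comparisonStage hinv hex hmem hA hA' (-2)).next hinv hex (hmem _ (by norm_num)) :=
    comparisonStage_succ hinv hex hmem hA hA' (by norm_num)
  have h2 : comparisonStage hinv hex hmem hA hA' (-2) =
      (comparisonStage hinv hex hmem hA hA' (-3)).next hinv hex (hmem _ (by norm_num)) :=
    comparisonStage_succ hinv hex hmem hA hA' le_rfl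
  rw [comparisonMap, h1, h2, comparisonStage, Int.inductionOn'_self]
  rfl

end Construction

theorem statement12
    (hinv : ∀ {X' Y' : B} {f g : X' ⟶ Y'} (η : f ⟶ g), IsIso η)
    (Pb : B → Prop) (B₀ : B) (A A' : SecChainComplex B)
    (hA : A.IsAugmented B₀) (hA' : A'.IsAugmented B₀)
    (hmem : ∀ n : ℤ, 0 ≤ n → Pb (A.X n))
    (hex : A'.IsSecExact Pb) :
    ∃ (f : ∀ n : ℤ, A.X n ⟶ A'.X n)
      (φ : ∀ n : ℤ, (A.d n ≫ f n) ⟶ (f (n + 1) ≫ A'.d n)),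
      IsSecChainMap A A' f φ ∧
      f (-1) = eqToHom (hA.eq_neg_one.trans hA'.eq_neg_one.symm) :=
  ⟨_, _, isSecChainMap_comparison hinv hex hmem hA hA',
    comparisonMap_neg_one hinv hex hmem hA hA'⟩

end Statement12
end

section
/- Let (X_•,d,δ) be a secondary chain complex in 𝐁, Y an object, c : X_n → Y a map with [c][d_n] = 0 in the homotopy category, and γ : 0 ⇒ c d_n a track. Then the track Γ_{c,γ} := cδ_n □ γd_{n+1} ∈ Aut(0_{X_{n+2},Y}) satisfies Γ_{c,γ} d_{n+2} = 0; that is, whiskering Γ_{c,γ} with d_{n+2} yields the identity track of 0_{X_{n+3},Y}, so Γ_{c,γ} is an (n+2)-cocycle of the cochain complex Aut(0_{X_•,Y}). -/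
/-!
Track categories.  A track category is a category enriched in groupoids, i.e. a strict
2-category (`Bicategory` + `Bicategory.Strict`) all of whose 2-cells ("tracks") are
invertible.  Invertibility of all 2-cells is imposed by the hypothesis `hinv` below.
A strict zero object is an object whose hom-groupoids from and to any object are
trivial (exactly one map, exactly one track).
-/

open CategoryTheory CategoryTheory.Bicategory

universe w v u

section Gamma

variable {B : Type u} [Bicategory.{w, v} B] [Bicategory.Strict B] [StrictZero B]

/-- The track `Γ_{c,γ} = cδ □ γd₁ ∈ Aut(0_{A₂,Y})` associated to maps
`d₁ : A₂ ⟶ A₁`, `d₀ : A₁ ⟶ A₀`, a track `δ : d₀d₁ ⇒ 0`, a map `c : A₀ ⟶ Y` and a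
track `γ : 0 ⇒ c d₀`. -/
def GammaGen {A₂ A₁ A₀ Y : B} (d₁ : A₂ ⟶ A₁) (d₀ : A₁ ⟶ A₀)
    (δ : (d₁ ≫ d₀) ⟶ zmap A₂ A₀) (c : A₀ ⟶ Y) (γ : zmap A₁ Y ⟶ d₀ ≫ c) :
    zmap A₂ Y ⟶ zmap A₂ Y :=
  eqToHom (comp_zmap d₁ Y).symm ≫ (d₁ ◁ γ) ≫
    eqToHom (Bicategory.Strict.assoc d₁ d₀ c).symm ≫ (δ ▷ c) ≫
    eqToHom (zmap_comp A₂ c)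

/-- `Γ_{c,γ}` for a cocycle `c : X_n ⟶ Y` on a secondary chain complex and a track
`γ : 0 ⇒ c d_n`. -/
def SecChainComplex.Gamma (S : SecChainComplex B) {Y : B} (n : ℤ)
    (c : S.X n ⟶ Y) (γ : zmap (S.X (n + 1)) Y ⟶ S.d n ≫ c) :
    zmap (S.X (n + 1 + 1)) Y ⟶ zmap (S.X (n + 1 + 1)) Y :=
  GammaGen (S.d (n + 1)) (S.d n) (S.δ n) c γ

end Gamma

/-!
`Γ_{c,γ}d_{n+2} = cδ_n d_{n+2} □ γd_{n+1}d_{n+2}`, and the compatibility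
`δ_n d_{n+2} = d_n δ_{n+1}` turns this into `(cd_n)δ_{n+1} □ γ(d_{n+1}d_{n+2})`. By the
interchange law this is `γ0 □ 0δ_{n+1}`, and a track whiskered with a zero map is an identity
because the hom-groupoids into and out of `∗` are trivial.
-/

namespace CategoryTheory.Bicategory

variable {B : Type u} [Bicategory.{w, v} B] [Bicategory.Strict B] [StrictZero B]

lemma track_to_zobj_eq_eqToHom {X : B} {f g : X ⟶ StrictZero.zobj} (η : f ⟶ g) (h : f = g) :
    η = eqToHom h := by
  subst h
  have := StrictZero.uniqueTrackTo X f f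
  exact Subsingleton.elim _ _

lemma track_from_zobj_eq_eqToHom {X : B} {f g : StrictZero.zobj ⟶ X} (η : f ⟶ g) (h : f = g) :
    η = eqToHom h := by
  subst h
  have := StrictZero.uniqueTrackFrom X f f
  exact Subsingleton.elim _ _

lemma whiskerRight_zmap {X Y Z : B} {f g : X ⟶ Y} (η : f ⟶ g) :
    η ▷ zmap Y Z = eqToHom ((comp_zmap f Z).trans (comp_zmap g Z).symm) := by
  have := StrictZero.uniqueTo X
  unfold zmap
  rw [whiskerRight_comp, track_to_zobj_eq_eqToHom (η ▷ _) (Subsingleton.elim _ _)]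
  simp [Strict.associator_eqToIso, eqToHom_whiskerRight]

lemma whiskerLeft_zmap {X Y Z : B} {f g : Y ⟶ Z} (η : f ⟶ g) :
    zmap X Y ◁ η = eqToHom ((zmap_comp X f).trans (zmap_comp X g).symm) := by
  have := StrictZero.uniqueFrom Z
  unfold zmap
  rw [comp_whiskerLeft, track_from_zobj_eq_eqToHom (_ ◁ η) (Subsingleton.elim _ _)]
  simp [Strict.associator_eqToIso, whiskerLeft_eqToHom]

lemma whiskerLeft_comp_whiskerRight_zmap {X Y Z : B} {f : X ⟶ Y} {g : Y ⟶ Z}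
    (η : f ⟶ zmap X Y) (θ : zmap Y Z ⟶ g) :
    (f ◁ θ) ≫ (η ▷ g) = eqToHom ((comp_zmap f Z).trans (zmap_comp X g).symm) := by
  rw [whisker_exchange, whiskerRight_zmap, whiskerLeft_zmap, eqToHom_trans]

lemma whiskerLeft_gammaGen {A₃ A₂ A₁ A₀ Y : B} (d₂ : A₃ ⟶ A₂) (d₁ : A₂ ⟶ A₁) (d₀ : A₁ ⟶ A₀)
    (δ₁ : d₂ ≫ d₁ ⟶ zmap A₃ A₁) (δ₀ : d₁ ≫ d₀ ⟶ zmap A₂ A₀)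
    (compat : (δ₁ ▷ d₀) ≫ eqToHom (zmap_comp A₃ d₀) =
      eqToHom (Strict.assoc d₂ d₁ d₀) ≫ (d₂ ◁ δ₀) ≫ eqToHom (comp_zmap d₂ A₀))
    (c : A₀ ⟶ Y) (γ : zmap A₁ Y ⟶ d₀ ≫ c) :
    eqToHom (comp_zmap d₂ Y).symm ≫ (d₂ ◁ GammaGen d₁ d₀ δ₀ c γ) ≫
      eqToHom (comp_zmap d₂ Y) = 𝟙 (zmap A₃ Y) := by
  have hδ₀ : d₂ ◁ δ₀ = eqToHom (Strict.assoc d₂ d₁ d₀).symm ≫ (δ₁ ▷ d₀) ≫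
      eqToHom ((zmap_comp A₃ d₀).trans (comp_zmap d₂ A₀).symm) := by
    rw [← eqToHom_trans (zmap_comp A₃ d₀) (comp_zmap d₂ A₀).symm, reassoc_of% compat]
    simp
  calc _ = eqToHom (comp_zmap (d₂ ≫ d₁) Y).symm ≫
        ((d₂ ≫ d₁) ◁ γ ≫ δ₁ ▷ (d₀ ≫ c)) ≫ eqToHom (zmap_comp A₃ (d₀ ≫ c)) := by
        simp only [GammaGen, whiskerLeft_comp, whiskerLeft_eqToHom, comp_whiskerLeft_symm,
          whisker_assoc_symm, hδ₀, comp_whiskerRight, eqToHom_whiskerRight,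
          whiskerRight_comp_symm, Strict.associator_eqToIso, eqToIso.hom, eqToIso.inv,
          Category.assoc, eqToHom_trans, eqToHom_trans_assoc, eqToHom_refl, Category.id_comp]
    _ = 𝟙 (zmap A₃ Y) := by
        rw [whiskerLeft_comp_whiskerRight_zmap, eqToHom_trans, eqToHom_trans, eqToHom_refl]

end CategoryTheory.Bicategory

theorem statement15_general {B : Type u} [Bicategory.{w, v} B] [Bicategory.Strict B]
    [StrictZero B]
    (S : SecChainComplex B) (Y : B) (n : ℤ) (c : S.X n ⟶ Y)
    (γ : zmap (S.X (n + 1)) Y ⟶ S.d n ≫ c) :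
    eqToHom (comp_zmap (S.d (n + 1 + 1)) Y).symm ≫
        (S.d (n + 1 + 1) ◁ S.Gamma n c γ) ≫
        eqToHom (comp_zmap (S.d (n + 1 + 1)) Y) =
      𝟙 (zmap (S.X (n + 1 + 1 + 1)) Y) :=
  whiskerLeft_gammaGen _ _ _ _ _ (S.compat n) c γ

theorem statement15 {B : Type u} [Bicategory.{w, v} B] [Bicategory.Strict B]
    [StrictZero B]
    (hinv : ∀ {X' Y' : B} {f g : X' ⟶ Y'} (η : f ⟶ g), IsIso η)
    (S : SecChainComplex B) (Y : B) (n : ℤ) (c : S.X n ⟶ Y)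
    (hc : Nonempty ((S.d n ≫ c) ⟶ zmap (S.X (n + 1)) Y))
    (γ : zmap (S.X (n + 1)) Y ⟶ S.d n ≫ c) :
    eqToHom (comp_zmap (S.d (n + 1 + 1)) Y).symm ≫
        (S.d (n + 1 + 1) ◁ S.Gamma n c γ) ≫
        eqToHom (comp_zmap (S.d (n + 1 + 1)) Y) =
      𝟙 (zmap (S.X (n + 1 + 1 + 1)) Y) :=
  statement15_general S Y n c γ
end
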